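/- arXiv:q-alg/9604017 — 3 statements merged into one kernel-verified Lean document; each statement's English description precedes it below -/
import Mathlib

section
/- Let G = ℂ[ℤ/p] with projectors P^r, and define R = Σ_{r,s=0}^{p-1} q^{rs} P^r ⊗ P^s ∈ G ⊗ G. Then R is invertible with inverse R^{-1} = Σ_{r,s} q^{-rs} P^r ⊗ P^s, and R satisfies the Yang–Baxter equation R₁₂ R₁₃ R₂₃ = R₂₃ R₁₃ R₁₂ in G ⊗ G ⊗ G. -/
open Finset TensorProduct

noncomputable section

/-- The group algebra `ℂ[ℤ/p]`. -/
abbrev Gp (p : ℕ) := MonoidAlgebra ℂ (Multiplicative (ZMod p))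

/-- The canonical generator `g` of `ℂ[ℤ/p]`. -/
noncomputable def gp (p : ℕ) : Gp p :=
  MonoidAlgebra.of ℂ (Multiplicative (ZMod p)) (Multiplicative.ofAdd 1)

/-- `q = exp(2πi/p)`. -/
noncomputable def qp (p : ℕ) : ℂ := Complex.exp (2 * Real.pi * Complex.I / p)

/-- The projector `P^r = (1/p) ∑_{s<p} q^{-rs} g^s`. -/
noncomputable def Pp (p : ℕ) (r : ℕ) : Gp p :=
  (p : ℂ)⁻¹ • ∑ s ∈ Finset.range p, (qp p ^ (r * s))⁻¹ • gp p ^ s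

/-- The `R`-matrix `R = ∑_{r,s} q^{rs} P^r ⊗ P^s ∈ G ⊗ G`. -/
noncomputable def Rp (p : ℕ) : Gp p ⊗[ℂ] Gp p :=
  ∑ r ∈ Finset.range p, ∑ s ∈ Finset.range p,
    qp p ^ (r * s) • (Pp p r ⊗ₜ[ℂ] Pp p s)

/-- The candidate inverse `∑_{r,s} q^{-rs} P^r ⊗ P^s`. -/
noncomputable def RpInv (p : ℕ) : Gp p ⊗[ℂ] Gp p :=
  ∑ r ∈ Finset.range p, ∑ s ∈ Finset.range p,
    (qp p ^ (r * s))⁻¹ • (Pp p r ⊗ₜ[ℂ] Pp p s)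

/-- `R₁₂ ∈ G ⊗ G ⊗ G`. -/
noncomputable def Rp12 (p : ℕ) : Gp p ⊗[ℂ] (Gp p ⊗[ℂ] Gp p) :=
  ∑ r ∈ Finset.range p, ∑ s ∈ Finset.range p,
    qp p ^ (r * s) • (Pp p r ⊗ₜ[ℂ] (Pp p s ⊗ₜ[ℂ] (1 : Gp p)))

/-- `R₁₃ ∈ G ⊗ G ⊗ G`. -/
noncomputable def Rp13 (p : ℕ) : Gp p ⊗[ℂ] (Gp p ⊗[ℂ] Gp p) :=
  ∑ r ∈ Finset.range p, ∑ s ∈ Finset.range p,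
    qp p ^ (r * s) • (Pp p r ⊗ₜ[ℂ] ((1 : Gp p) ⊗ₜ[ℂ] Pp p s))

/-- `R₂₃ ∈ G ⊗ G ⊗ G`. -/
noncomputable def Rp23 (p : ℕ) : Gp p ⊗[ℂ] (Gp p ⊗[ℂ] Gp p) :=
  ∑ r ∈ Finset.range p, ∑ s ∈ Finset.range p,
    qp p ^ (r * s) • ((1 : Gp p) ⊗ₜ[ℂ] (Pp p r ⊗ₜ[ℂ] Pp p s))

/-! The projectors `P^r` are the Fourier idempotents of `ℂ[ℤ/p]` for the standard character:
`g^b P^r = q^{rb} P^r`, so orthogonality of characters makes them a complete family of orthogonal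
idempotents, and the `P^r ⊗ P^s` form one in `G ⊗ G`. Against such a family, elements
`∑ c_x e_x` multiply coefficientwise, whence `R R⁻¹ = ∑ e_x = 1`. Since `G` is commutative, so is
`G ⊗ G ⊗ G`, and the Yang–Baxter equation holds trivially. -/

section OrthogonalIdempotents

variable {K A B I J : Type*} [CommSemiring K] [Semiring A] [Algebra K A] [Semiring B]
  [Algebra K B] [Fintype I] [DecidableEq I] [Fintype J] [DecidableEq J]

theorem CompleteOrthogonalIdempotents.sum_smul_mul_sum_smul {e : I → A}
    (he : CompleteOrthogonalIdempotents e) (c d : I → K) :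
    (∑ i, c i • e i) * (∑ i, d i • e i) = ∑ i, (c i * d i) • e i := by
  simp_rw [Finset.sum_mul_sum, smul_mul_smul_comm, he.mul_eq, smul_ite, smul_zero,
    Finset.sum_ite_eq, Finset.mem_univ, if_true]

theorem CompleteOrthogonalIdempotents.sum_smul_mul_sum_smul_eq_one {e : I → A}
    (he : CompleteOrthogonalIdempotents e) {c d : I → K} (hcd : ∀ i, c i * d i = 1) :
    (∑ i, c i • e i) * (∑ i, d i • e i) = 1 := by
  simp_rw [he.sum_smul_mul_sum_smul, hcd, one_smul, he.complete]

theorem CompleteOrthogonalIdempotents.tmul {e : I → A} {f : J → B}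
    (he : CompleteOrthogonalIdempotents e) (hf : CompleteOrthogonalIdempotents f) :
    CompleteOrthogonalIdempotents fun x : I × J => e x.1 ⊗ₜ[K] f x.2 where
  toOrthogonalIdempotents := by
    refine OrthogonalIdempotents.iff_mul_eq.2 fun x y => ?_
    rw [Algebra.TensorProduct.tmul_mul_tmul, he.mul_eq, hf.mul_eq]
    by_cases h₁ : x.1 = y.1 <;> by_cases h₂ : x.2 = y.2 <;> simp [h₁, h₂, Prod.ext_iff]
  complete := by
    rw [Fintype.sum_prod_type]
    simp_rw [← tmul_sum, ← sum_tmul, he.complete, hf.complete]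
    rfl

end OrthogonalIdempotents

section FourierIdempotent

variable {R K : Type*} [CommRing R] [Fintype R] [Field K]

def fourierIdempotent (ψ : AddChar R K) (r : R) : MonoidAlgebra K (Multiplicative R) :=
  (Fintype.card R : K)⁻¹ •
    ∑ a : R, ψ (-(r * a)) • MonoidAlgebra.of K (Multiplicative R) (Multiplicative.ofAdd a)

variable (ψ : AddChar R K)

theorem of_mul_fourierIdempotent (b r : R) :
    MonoidAlgebra.of K (Multiplicative R) (Multiplicative.ofAdd b) * fourierIdempotent ψ r =
      ψ (r * b) • fourierIdempotent ψ r := by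
  set g := fun a : R => MonoidAlgebra.of K (Multiplicative R) (Multiplicative.ofAdd a)
  have hshift (a : R) : ψ (r * b) * ψ (-(r * (b + a))) = ψ (-(r * a)) := by
    rw [← AddChar.map_add_eq_mul]; ring_nf
  have hsum : g b * ∑ a, ψ (-(r * a)) • g a = ψ (r * b) • ∑ a, ψ (-(r * a)) • g a := by
    rw [Finset.mul_sum, Finset.smul_sum]
    refine Fintype.sum_equiv (Equiv.addLeft b) _ _ fun a => ?_
    rw [Equiv.coe_addLeft, smul_smul, hshift, mul_smul_comm, ← map_mul, ← ofAdd_add]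
  rw [fourierIdempotent, mul_smul_comm, hsum, smul_comm]

variable [DecidableEq R] {ψ} (hψ : ψ.IsPrimitive) (hR : (Fintype.card R : K) ≠ 0)
include hψ hR

theorem fourierIdempotent_mul (r s : R) :
    fourierIdempotent ψ r * fourierIdempotent ψ s =
      if r = s then fourierIdempotent ψ r else 0 := by
  have hchar (a : R) : ψ (-(r * a)) * ψ (s * a) = ψ (a * (s - r)) := by
    rw [← AddChar.map_add_eq_mul]; ring_nf
  nth_rw 1 [fourierIdempotent]
  rw [smul_mul_assoc, Finset.sum_mul]
  simp_rw [smul_mul_assoc, of_mul_fourierIdempotent, smul_smul, hchar, ← Finset.sum_smul,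
    AddChar.sum_mulShift _ hψ, sub_eq_zero, eq_comm (a := s)]
  split_ifs with h
  · rw [h, smul_smul, inv_mul_cancel₀ hR, one_smul]
  · rw [Nat.cast_zero, zero_smul, smul_zero]

theorem sum_fourierIdempotent : ∑ r, fourierIdempotent ψ r = 1 := by
  simp only [fourierIdempotent, ← Finset.smul_sum]
  rw [Finset.sum_comm]
  simp_rw [← Finset.sum_smul, ← mul_neg, AddChar.sum_mulShift _ hψ, neg_eq_zero, Nat.cast_ite,
    Nat.cast_zero, ite_smul, zero_smul, Finset.sum_ite_eq', Finset.mem_univ, if_true, smul_smul,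
    inv_mul_cancel₀ hR, one_smul, ofAdd_zero, map_one]

theorem completeOrthogonalIdempotents_fourierIdempotent :
    CompleteOrthogonalIdempotents (fourierIdempotent ψ) :=
  ⟨OrthogonalIdempotents.iff_mul_eq.2 (fourierIdempotent_mul hψ hR), sum_fourierIdempotent hψ hR⟩

end FourierIdempotent

section CyclicGroupAlgebra

variable (p : ℕ)

theorem gp_pow (n : ℕ) :
    gp p ^ n =
      MonoidAlgebra.of ℂ (Multiplicative (ZMod p)) (Multiplicative.ofAdd (n : ZMod p)) := by
  rw [gp, ← map_pow, ← ofAdd_nsmul, nsmul_one]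

variable [NeZero p]

theorem qp_pow (n : ℕ) : qp p ^ n = ZMod.stdAddChar (n : ZMod p) := by
  rw [qp, ← Complex.exp_nat_mul, ← Int.cast_natCast (R := ZMod p), ZMod.stdAddChar_coe]
  push_cast
  ring_nf

theorem sum_range_eq_sum_zmod {M : Type*} [AddCommMonoid M] (f : ZMod p → M) :
    ∑ s ∈ range p, f s = ∑ a : ZMod p, f a := by
  refine Finset.sum_nbij' (↑) ZMod.val (fun _ _ => mem_univ _)
    (fun a _ => mem_range.2 (ZMod.val_lt a)) (fun s hs => ZMod.val_cast_of_lt (mem_range.1 hs))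
    (fun a _ => ZMod.natCast_zmod_val a) fun _ _ => rfl

theorem Pp_eq_fourierIdempotent (r : ℕ) :
    Pp p r = fourierIdempotent ZMod.stdAddChar (r : ZMod p) := by
  rw [Pp, fourierIdempotent, ZMod.card, ← sum_range_eq_sum_zmod]
  refine congrArg _ (sum_congr rfl fun s _ => ?_)
  rw [qp_pow, gp_pow, Nat.cast_mul, AddChar.map_neg_eq_inv]

theorem sum_range_sum_range_smul_Pp_tmul_Pp (f : ℂ → ℂ) :
    ∑ r ∈ range p, ∑ s ∈ range p, f (qp p ^ (r * s)) • (Pp p r ⊗ₜ[ℂ] Pp p s) =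
      ∑ x : ZMod p × ZMod p, f (ZMod.stdAddChar (x.1 * x.2)) •
        (fourierIdempotent ZMod.stdAddChar x.1 ⊗ₜ[ℂ] fourierIdempotent ZMod.stdAddChar x.2) := by
  rw [Fintype.sum_prod_type, ← sum_range_eq_sum_zmod]
  refine sum_congr rfl fun r _ => ?_
  rw [← sum_range_eq_sum_zmod]
  refine sum_congr rfl fun s _ => ?_
  rw [Pp_eq_fourierIdempotent, Pp_eq_fourierIdempotent, qp_pow, Nat.cast_mul]

theorem completeOrthogonalIdempotents_fourierIdempotent_tmul :
    CompleteOrthogonalIdempotents fun x : ZMod p × ZMod p =>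
      fourierIdempotent ZMod.stdAddChar x.1 ⊗ₜ[ℂ] fourierIdempotent ZMod.stdAddChar x.2 := by
  have he := completeOrthogonalIdempotents_fourierIdempotent (ZMod.isPrimitive_stdAddChar p)
    (by rw [ZMod.card]; exact_mod_cast NeZero.ne p)
  exact he.tmul he

theorem Rp_mul_RpInv : Rp p * RpInv p = 1 := by
  rw [show Rp p = _ from sum_range_sum_range_smul_Pp_tmul_Pp p id,
    show RpInv p = _ from sum_range_sum_range_smul_Pp_tmul_Pp p (·⁻¹)]
  exact (completeOrthogonalIdempotents_fourierIdempotent_tmul p).sum_smul_mul_sum_smul_eq_one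
    fun x => (AddChar.val_isUnit _ _).mul_inv_cancel

end CyclicGroupAlgebra

/-- `R = ∑ q^{rs} P^r ⊗ P^s` is invertible with inverse
`∑ q^{-rs} P^r ⊗ P^s`, and satisfies the Yang–Baxter equation
`R₁₂ R₁₃ R₂₃ = R₂₃ R₁₃ R₁₂` in `G ⊗ G ⊗ G`. -/
theorem stmt2 (p : ℕ) (hp : 0 < p) :
    Rp p * RpInv p = 1 ∧ RpInv p * Rp p = 1 ∧
    Rp12 p * Rp13 p * Rp23 p = Rp23 p * Rp13 p * Rp12 p := by
  have : NeZero p := ⟨hp.ne'⟩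
  refine ⟨Rp_mul_RpInv p, mul_comm (Rp p) (RpInv p) ▸ Rp_mul_RpInv p, ?_⟩
  ring
end
end

section
/- Let (G, R) be a quasitriangular Hopf algebra and N = R'R. Then N satisfies the reflection-type exchange relation R' N^{(1)} R N^{(2)} = N^{(2)} R' N^{(1)} R in G ⊗ G ⊗ G, where N^{(1)} = N₁₃, N^{(2)} = N₂₃, R = R₁₂, R' = σ(R)₁₂. -/
open TensorProduct

noncomputable section

variable (G : Type*) [Ring G] [Algebra ℂ G]

/-- Embedding of `G ⊗ G` in legs 1,2 of `(G ⊗ G) ⊗ G`. -/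
noncomputable def leg12 : (G ⊗[ℂ] G) →ₐ[ℂ] (G ⊗[ℂ] G) ⊗[ℂ] G :=
  Algebra.TensorProduct.includeLeft

/-- Embedding of `G ⊗ G` in legs 1,3 of `(G ⊗ G) ⊗ G`. -/
noncomputable def leg13 : (G ⊗[ℂ] G) →ₐ[ℂ] (G ⊗[ℂ] G) ⊗[ℂ] G :=
  Algebra.TensorProduct.map
    (Algebra.TensorProduct.includeLeft : G →ₐ[ℂ] G ⊗[ℂ] G) (AlgHom.id ℂ G)

/-- Embedding of `G ⊗ G` in legs 2,3 of `(G ⊗ G) ⊗ G`. -/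
noncomputable def leg23 : (G ⊗[ℂ] G) →ₐ[ℂ] (G ⊗[ℂ] G) ⊗[ℂ] G :=
  Algebra.TensorProduct.map
    (Algebra.TensorProduct.includeRight : G →ₐ[ℂ] G ⊗[ℂ] G) (AlgHom.id ℂ G)

/-- Embedding of `G ⊗ G` in legs 1,2 of `G ⊗ (G ⊗ G)`. -/
noncomputable def leg12' : (G ⊗[ℂ] G) →ₐ[ℂ] G ⊗[ℂ] (G ⊗[ℂ] G) :=
  Algebra.TensorProduct.map (AlgHom.id ℂ G)
    (Algebra.TensorProduct.includeLeft : G →ₐ[ℂ] G ⊗[ℂ] G)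

/-- Embedding of `G ⊗ G` in legs 1,3 of `G ⊗ (G ⊗ G)`. -/
noncomputable def leg13' : (G ⊗[ℂ] G) →ₐ[ℂ] G ⊗[ℂ] (G ⊗[ℂ] G) :=
  Algebra.TensorProduct.map (AlgHom.id ℂ G)
    (Algebra.TensorProduct.includeRight : G →ₐ[ℂ] G ⊗[ℂ] G)

/-!
The quasitriangularity axioms give the Yang–Baxter equation `R₁₂ R₁₃ R₂₃ = R₂₃ R₁₃ R₁₂`.
Conjugating it by the flips of legs `1,2` and `2,3` of `G ⊗ G ⊗ G` yields three relabelled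
copies of it, involving `R₂₁ = σ(R)₁₂`, `R₃₁` and `R₃₂`. The reflection equation for
`N = R₂₁ R₁₂` is then a formal consequence of these four braid relations in any monoid.
-/

def flip12 : ((G ⊗[ℂ] G) ⊗[ℂ] G) ≃ₐ[ℂ] ((G ⊗[ℂ] G) ⊗[ℂ] G) :=
  Algebra.TensorProduct.congr (Algebra.TensorProduct.comm ℂ G G) AlgEquiv.refl

def flip23 : ((G ⊗[ℂ] G) ⊗[ℂ] G) ≃ₐ[ℂ] ((G ⊗[ℂ] G) ⊗[ℂ] G) :=
  (Algebra.TensorProduct.assoc ℂ ℂ ℂ G G G).trans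
    ((Algebra.TensorProduct.congr AlgEquiv.refl (Algebra.TensorProduct.comm ℂ G G)).trans
      (Algebra.TensorProduct.assoc ℂ ℂ ℂ G G G).symm)

section

variable {G}

local notation "σ" => Algebra.TensorProduct.comm ℂ G G

lemma comm_comm_apply (x : G ⊗[ℂ] G) : σ (σ x) = x := by
  simpa only [Algebra.TensorProduct.comm_symm] using (σ).apply_symm_apply x

lemma flip12_leg12 (x : G ⊗[ℂ] G) : flip12 G (leg12 G x) = leg12 G (σ x) := by
  induction x using TensorProduct.induction_on <;>
    simp_all [flip12, leg12, Algebra.TensorProduct.includeLeft_apply]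

lemma flip12_leg13 (x : G ⊗[ℂ] G) : flip12 G (leg13 G x) = leg23 G x := by
  induction x using TensorProduct.induction_on <;> simp_all [flip12, leg13, leg23]

lemma flip12_leg23 (x : G ⊗[ℂ] G) : flip12 G (leg23 G x) = leg13 G x := by
  induction x using TensorProduct.induction_on <;> simp_all [flip12, leg13, leg23]

lemma flip23_leg12 (x : G ⊗[ℂ] G) : flip23 G (leg12 G x) = leg13 G x := by
  induction x using TensorProduct.induction_on <;>
    simp_all [flip23, leg12, leg13, Algebra.TensorProduct.includeLeft_apply,
      TensorProduct.add_tmul]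

lemma flip23_leg13 (x : G ⊗[ℂ] G) : flip23 G (leg13 G x) = leg12 G x := by
  induction x using TensorProduct.induction_on <;>
    simp_all [flip23, leg12, leg13, Algebra.TensorProduct.includeLeft_apply,
      TensorProduct.add_tmul]

lemma flip23_leg23 (x : G ⊗[ℂ] G) : flip23 G (leg23 G x) = leg23 G (σ x) := by
  induction x using TensorProduct.induction_on <;> simp_all [flip23, leg23]

lemma leg12_mul_map_comul (Δ : G →ₐ[ℂ] G ⊗[ℂ] G) (R : G ⊗[ℂ] G)
    (hR : ∀ x : G, R * Δ x = σ (Δ x) * R) (x : G ⊗[ℂ] G) :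
    leg12 G R * Algebra.TensorProduct.map Δ (AlgHom.id ℂ G) x
      = flip12 G (Algebra.TensorProduct.map Δ (AlgHom.id ℂ G) x) * leg12 G R := by
  induction x using TensorProduct.induction_on with
  | zero => simp
  | tmul a b =>
    simp only [Algebra.TensorProduct.map_tmul, AlgHom.coe_id, id_eq, leg12,
      Algebra.TensorProduct.includeLeft_apply, Algebra.TensorProduct.tmul_mul_tmul,
      one_mul, mul_one, hR a, flip12, Algebra.TensorProduct.congr_apply,
      AlgEquiv.coe_refl, AlgEquiv.coe_toAlgHom]
  | add x y hx hy => simp only [map_add, mul_add, add_mul, hx, hy]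

lemma leg12_mul_leg13_mul_leg23 (Δ : G →ₐ[ℂ] G ⊗[ℂ] G) (R : G ⊗[ℂ] G)
    (hΔR : Algebra.TensorProduct.map Δ (AlgHom.id ℂ G) R = leg13 G R * leg23 G R)
    (hR : ∀ x : G, R * Δ x = σ (Δ x) * R) :
    leg12 G R * leg13 G R * leg23 G R = leg23 G R * leg13 G R * leg12 G R := by
  have h := leg12_mul_map_comul Δ R hR R
  rw [hΔR, map_mul, flip12_leg13, flip12_leg23] at h
  rw [mul_assoc, h]

end

/-- Read with `A, B, C = R₁₂, R₁₃, R₂₃` and `A', B', C' = R₂₁, R₃₁, R₃₂`: the hypotheses are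
the Yang–Baxter equation in four relabellings, the conclusion is the reflection equation. -/
theorem reflection_of_yangBaxter {M : Type*} [Monoid M] {A A' B B' C C' : M}
    (h₁ : A * B * C = C * B * A) (h₂ : B * A * C' = C' * A * B)
    (h₃ : A' * B' * C' = C' * B' * A') (h₄ : C * A' * B' = B' * A' * C) :
    A' * (B' * B) * A * (C' * C) = C' * C * A' * (B' * B) * A := by
  have h₁' : A * (B * C) = C * (B * A) := by rw [← mul_assoc, h₁, mul_assoc]
  have braid {X Y Z X' Y' Z' : M} (h : X * Y * Z = X' * Y' * Z') (w : M) :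
      X * (Y * (Z * w)) = X' * (Y' * (Z' * w)) := by
    simp only [← mul_assoc, h]
  calc A' * (B' * B) * A * (C' * C)
      = A' * (B' * (B * (A * (C' * C)))) := by simp only [mul_assoc]
    _ = A' * (B' * (C' * (A * (B * C)))) := by rw [braid h₂]
    _ = C' * (B' * (A' * (A * (B * C)))) := by rw [braid h₃]
    _ = C' * (B' * (A' * (C * (B * A)))) := by rw [h₁']
    _ = C' * (C * (A' * (B' * (B * A)))) := by rw [braid h₄]
    _ = C' * C * A' * (B' * B) * A := by simp only [mul_assoc]

theorem stmt9 (Δ : G →ₐ[ℂ] G ⊗[ℂ] G) (R : G ⊗[ℂ] G)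
    (hqt1 : (Algebra.TensorProduct.map Δ (AlgHom.id ℂ G)) R
              = leg13 G R * leg23 G R)
    (hqt3 : ∀ x : G, R * Δ x = (Algebra.TensorProduct.comm ℂ G G) (Δ x) * R) :
    leg12 G ((Algebra.TensorProduct.comm ℂ G G) R)
      * leg13 G ((Algebra.TensorProduct.comm ℂ G G) R * R)
      * leg12 G R
      * leg23 G ((Algebra.TensorProduct.comm ℂ G G) R * R)
    = leg23 G ((Algebra.TensorProduct.comm ℂ G G) R * R)
      * leg12 G ((Algebra.TensorProduct.comm ℂ G G) R)
      * leg13 G ((Algebra.TensorProduct.comm ℂ G G) R * R)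
      * leg12 G R := by
  set σR := Algebra.TensorProduct.comm ℂ G G R
  have hσσR : Algebra.TensorProduct.comm ℂ G G σR = R := comm_comm_apply R
  have h₁ := leg12_mul_leg13_mul_leg23 Δ R hqt1 hqt3
  have h₂ : leg13 G R * leg12 G R * leg23 G σR = leg23 G σR * leg12 G R * leg13 G R := by
    simpa only [map_mul, flip23_leg12, flip23_leg13, flip23_leg23] using congrArg (flip23 G) h₁
  have h₄ : leg23 G R * leg12 G σR * leg13 G σR = leg13 G σR * leg12 G σR * leg23 G R := by
    simpa only [map_mul, flip12_leg12, flip12_leg13, flip12_leg23, hσσR]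
      using congrArg (flip12 G) h₂
  have h₃ : leg12 G σR * leg13 G σR * leg23 G σR = leg23 G σR * leg13 G σR * leg12 G σR := by
    simpa only [map_mul, flip23_leg12, flip23_leg13, flip23_leg23, hσσR]
      using (congrArg (flip23 G) h₄).symm
  rw [map_mul, map_mul]
  exact reflection_of_yangBaxter h₁ h₂ h₃ h₄
end
end

section
/- Each representation D^{st}_N of the lattice U(1) current algebra defined in the previous statement is irreducible (on the p^{N-1}-dimensional space (ℂ^p)^{⊗(N-1)}), and representations D^{st}_N and D^{s't'}_N are inequivalent unless (s,t) = (s',t') (as elements of (ℤ/p)², with p odd). -/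
/-!
The operators `g_ν` are multiplications by the characters `r ↦ q^{r_ν}`, which separate the
points of `(ℤ/p)^{N-1}`; a subalgebra of functions on a finite set separating points is
everything, so a subspace invariant under the `g_ν` is an ideal of the function algebra, and an
operator commuting with the `g_ν` commutes with every multiplication, hence is multiplication by
`φ 1`. An ideal is determined by its support, which `v_ν` translates by the unit vector `e_ν`;
being nonempty and stable under these translations, it is everything. For an intertwiner
`φ = (φ 1) * ·`, comparing `c` and `g₀` at a point where `φ 1` does not vanish gives
`q^s = q^{s'}` and `q^{s+t} = q^{s'+t'}`.
-/

noncomputable section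

/-- The representation space of `D^{st}_N`: functions on tuples
`(r₁,…,r_{N−1}) ∈ (ℤ/p)^{N−1}`. -/
abbrev Bsp (p N : ℕ) := (Fin (N - 1) → ZMod p) → ℂ

/-- The holonomy operator
`v_ν |r⟩ = q^{r₁+⋯+r_{ν−1}} |r₁,…,r_ν+1,…,r_{N−1}⟩`. -/
noncomputable def vOp (p N : ℕ) (ν : Fin (N - 1)) :
    Bsp p N →ₗ[ℂ] Bsp p N where
  toFun f := fun r =>
    qp p ^ (∑ μ ∈ Finset.univ.filter (fun μ => μ < ν), (r μ).val) *
      f (Function.update r ν (r ν - 1))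
  map_add' f g := by funext r; simp [mul_add]
  map_smul' c f := by funext r; simp [smul_eq_mul]; ring

/-- The site operator `g_ν |r⟩ = q^{r_ν} |r⟩` (for `1 ≤ ν ≤ N−1`). -/
noncomputable def gOp (p N : ℕ) (ν : Fin (N - 1)) :
    Bsp p N →ₗ[ℂ] Bsp p N where
  toFun f := fun r => qp p ^ (r ν).val * f r
  map_add' f g := by funext r; simp [mul_add]
  map_smul' c f := by funext r; simp [smul_eq_mul]; ring

/-- The site operator `g₀ |r⟩ = q^{r₁+⋯+r_{N−1}+s+t} |r⟩`. -/
noncomputable def g0Op (p N : ℕ) (s t : ZMod p) :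
    Bsp p N →ₗ[ℂ] Bsp p N where
  toFun f := fun r => qp p ^ ((∑ μ, (r μ).val) + s.val + t.val) * f r
  map_add' f g := by funext r; simp [mul_add]
  map_smul' c f := by funext r; simp [smul_eq_mul]; ring

/-- The central monodromy operator `c |r⟩ = q^s |r⟩`. -/
noncomputable def cOp (p N : ℕ) (s : ZMod p) :
    Bsp p N →ₗ[ℂ] Bsp p N :=
  qp p ^ s.val • LinearMap.id

open Finset

section FunctionAlgebra

variable {X K : Type*} [Field K]

theorem Subalgebra.pi_single_one_mem_of_separatesPoints [Finite X] [DecidableEq X]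
    {S : Subalgebra K (X → K)} (hS : (S : Set (X → K)).SeparatesPoints) (x : X) :
    Pi.single x 1 ∈ S := by
  have := Fintype.ofFinite X
  choose! f hfS hf using fun y (hy : y ≠ x) => hS hy.symm
  have hprod : Pi.single x 1 = ∏ y ∈ univ.erase x,
      (f y - algebraMap K _ (f y y)) * algebraMap K _ (f y x - f y y)⁻¹ := by
    funext z
    simp only [Finset.prod_apply, Pi.mul_apply, Pi.sub_apply, Pi.algebraMap_apply,
      Algebra.algebraMap_self, RingHom.id_apply]
    by_cases hz : z = x
    · subst hz
      rw [Pi.single_eq_same, eq_comm]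
      exact prod_eq_one fun y hy =>
        mul_inv_cancel₀ (sub_ne_zero.2 (hf y (ne_of_mem_erase hy)))
    · rw [Pi.single_eq_of_ne hz, eq_comm]
      exact prod_eq_zero (mem_erase.2 ⟨hz, mem_univ z⟩) (by rw [sub_self, zero_mul])
  rw [hprod]
  exact prod_mem fun y hy => mul_mem (sub_mem (hfS y (ne_of_mem_erase hy))
    (algebraMap_mem _ _)) (algebraMap_mem _ _)

theorem Subalgebra.eq_top_of_separatesPoints [Finite X] {S : Subalgebra K (X → K)}
    (hS : (S : Set (X → K)).SeparatesPoints) : S = ⊤ := by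
  classical
  have := Fintype.ofFinite X
  refine eq_top_iff.2 fun f _ => ?_
  rw [← Finset.univ_sum_single f]
  refine sum_mem fun x _ => ?_
  rw [show Pi.single x (f x) = f x • Pi.single x (1 : K) by rw [← Pi.single_smul', smul_eq_mul,
    mul_one]]
  exact S.smul_mem (pi_single_one_mem_of_separatesPoints hS x) (f x)

theorem Submodule.eq_top_of_forall_exists_apply_ne_zero [Finite X] {V : Submodule K (X → K)}
    (hmul : ∀ h, ∀ f ∈ V, h * f ∈ V) (hsupp : ∀ x, ∃ f ∈ V, f x ≠ 0) : V = ⊤ := by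
  classical
  have := Fintype.ofFinite X
  refine eq_top_iff.2 fun f _ => ?_
  rw [← Finset.univ_sum_single f]
  refine sum_mem fun x _ => ?_
  obtain ⟨g, hg, hgx⟩ := hsupp x
  rw [show Pi.single x (f x) = Pi.single x (f x / g x) * g by
    rw [← Pi.single_mul_left, div_mul_cancel₀ _ hgx]]
  exact hmul _ g hg

end FunctionAlgebra

section Multipliers

variable {R A : Type*} [CommSemiring R] [Semiring A] [Algebra R A]

def Submodule.leftMultipliers (V : Submodule R A) : Subalgebra R A where
  carrier := {h | ∀ f ∈ V, h * f ∈ V}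
  mul_mem' ha hb f hf := by rw [mul_assoc]; exact ha _ (hb f hf)
  add_mem' ha hb f hf := by rw [add_mul]; exact V.add_mem (ha f hf) (hb f hf)
  algebraMap_mem' c f hf := by rw [← Algebra.smul_def]; exact V.smul_mem c hf

def LinearMap.leftMulCommutant (φ : A →ₗ[R] A) : Subalgebra R A where
  carrier := {h | ∀ f, φ (h * f) = h * φ f}
  mul_mem' ha hb f := by rw [mul_assoc, ha, hb, mul_assoc]
  add_mem' ha hb f := by rw [add_mul, map_add, ha, hb, add_mul]
  algebraMap_mem' c f := by rw [← Algebra.smul_def, ← Algebra.smul_def, map_smul]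

end Multipliers

theorem Set.eq_univ_of_add_single_mem {ι : Type*} [Fintype ι] [DecidableEq ι] {n : ℕ} [NeZero n]
    {U : Set (ι → ZMod n)} (hne : U.Nonempty) (hU : ∀ r ∈ U, ∀ i, r + Pi.single i 1 ∈ U) :
    U = Set.univ := by
  let T : AddSubmonoid (ι → ZMod n) :=
    { carrier := {d | ∀ r ∈ U, r + d ∈ U}
      add_mem' := fun ha hb r hr => by rw [← add_assoc]; exact hb _ (ha r hr)
      zero_mem' := fun r hr => by rwa [add_zero] }
  have hT (d : ι → ZMod n) : d ∈ T := by
    rw [← Finset.univ_sum_single d]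
    refine sum_mem fun i _ => ?_
    rw [show (Pi.single i (d i) : ι → ZMod n) = (d i).val • Pi.single i 1 by
      rw [← Pi.single_smul, nsmul_eq_mul, mul_one, ZMod.natCast_zmod_val]]
    exact nsmul_mem (show Pi.single i 1 ∈ T from fun r hr => hU r hr i) _
  obtain ⟨r, hr⟩ := hne
  exact Set.eq_univ_of_forall fun r' => by simpa using hT (r' - r) r hr

section Representation

variable {p N : ℕ}

theorem qp_pow_eq_qp_pow_iff (hp : 0 < p) {a b : ℕ} : qp p ^ a = qp p ^ b ↔ (a : ZMod p) = b := by
  have hq : IsPrimitiveRoot (qp p) p := Complex.isPrimitiveRoot_exp p hp.ne'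
  rw [ZMod.natCast_eq_natCast_iff, (hq.isOfFinOrder hp.ne').pow_eq_pow_iff_modEq, ← hq.eq_orderOf]

-- `gOp p N ν` is, definitionally, multiplication by `siteChar p N ν`.
def siteChar (p N : ℕ) (ν : Fin (N - 1)) : Bsp p N := fun r => qp p ^ (r ν).val

theorem siteChar_separatesPoints (hp : 0 < p) : (Set.range (siteChar p N)).SeparatesPoints := by
  have : NeZero p := ⟨hp.ne'⟩
  intro r r' h
  obtain ⟨ν, hν⟩ := Function.ne_iff.1 h
  refine ⟨_, ⟨ν, rfl⟩, ?_⟩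
  rwa [siteChar, siteChar, Ne, qp_pow_eq_qp_pow_iff hp, ZMod.natCast_zmod_val,
    ZMod.natCast_zmod_val]

theorem Subalgebra.eq_top_of_siteChar_mem (hp : 0 < p) {S : Subalgebra ℂ (Bsp p N)}
    (h : ∀ ν, siteChar p N ν ∈ S) : S = ⊤ :=
  have : NeZero p := ⟨hp.ne'⟩
  eq_top_of_separatesPoints
    (Set.separatesPoints_mono (Set.range_subset_iff.2 h) (siteChar_separatesPoints hp))

theorem mul_mem_of_gOp_invariant (hp : 0 < p) {V : Submodule ℂ (Bsp p N)}
    (hg : ∀ ν, V.map (gOp p N ν) ≤ V) (h : Bsp p N) {f : Bsp p N} (hf : f ∈ V) : h * f ∈ V := by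
  have : V.leftMultipliers = ⊤ :=
    Subalgebra.eq_top_of_siteChar_mem hp fun ν f hf => hg ν (Submodule.mem_map_of_mem hf)
  exact Algebra.eq_top_iff.1 this h f hf

theorem map_mul_of_commute_gOp (hp : 0 < p) (φ : Bsp p N →ₗ[ℂ] Bsp p N)
    (hg : ∀ ν f, φ (gOp p N ν f) = gOp p N ν (φ f)) (h f : Bsp p N) : φ (h * f) = h * φ f :=
  Algebra.eq_top_iff.1 (Subalgebra.eq_top_of_siteChar_mem (S := φ.leftMulCommutant) hp hg) h f

theorem vOp_apply_add_single_ne_zero {f : Bsp p N} {r : Fin (N - 1) → ZMod p} (hr : f r ≠ 0)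
    (ν : Fin (N - 1)) : vOp p N ν f (r + Pi.single ν 1) ≠ 0 := by
  have hupd :
      Function.update (r + Pi.single ν 1) ν ((r + Pi.single ν 1 : _ → ZMod p) ν - 1) = r := by
    ext μ
    by_cases h : μ = ν <;> simp [h]
  simp only [vOp, LinearMap.coe_mk, AddHom.coe_mk, hupd]
  exact mul_ne_zero (pow_ne_zero _ (Complex.exp_ne_zero _)) hr

theorem eq_bot_or_eq_top_of_vOp_gOp_invariant (hp : 0 < p) {V : Submodule ℂ (Bsp p N)}
    (hv : ∀ ν, V.map (vOp p N ν) ≤ V) (hg : ∀ ν, V.map (gOp p N ν) ≤ V) : V = ⊥ ∨ V = ⊤ := by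
  have : NeZero p := ⟨hp.ne'⟩
  refine or_iff_not_imp_left.2 fun hV => ?_
  obtain ⟨f, hf, hf0⟩ := V.exists_mem_ne_zero_of_ne_bot hV
  obtain ⟨r, hr⟩ := Function.ne_iff.1 hf0
  have hsupp : {r | ∃ f ∈ V, f r ≠ 0} = Set.univ :=
    Set.eq_univ_of_add_single_mem ⟨r, f, hf, hr⟩ fun r ⟨f, hf, hr⟩ ν =>
      ⟨_, hv ν (Submodule.mem_map_of_mem hf), vOp_apply_add_single_ne_zero hr ν⟩
  exact V.eq_top_of_forall_exists_apply_ne_zero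
    (fun h f hf => mul_mem_of_gOp_invariant hp hg h hf) (Set.eq_univ_iff_forall.1 hsupp)

theorem eq_and_eq_of_intertwining (hp : 0 < p) {s t s' t' : ZMod p}
    (φ : Bsp p N ≃ₗ[ℂ] Bsp p N) (hg : ∀ ν f, φ (gOp p N ν f) = gOp p N ν (φ f))
    (hg0 : ∀ f, φ (g0Op p N s t f) = g0Op p N s' t' (φ f))
    (hc : ∀ f, φ (cOp p N s f) = cOp p N s' (φ f)) : s = s' ∧ t = t' := by
  have : NeZero p := ⟨hp.ne'⟩
  have hφ (h : Bsp p N) : φ h = h * φ 1 := by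
    simpa using map_mul_of_commute_gOp hp φ.toLinearMap hg h 1
  obtain ⟨r, hr⟩ : ∃ r, φ 1 r ≠ 0 := Function.ne_iff.1 (φ.map_ne_zero_iff.2 one_ne_zero)
  have hs : s = s' := by
    have := congrFun (hc 1) r
    rw [hφ] at this
    simp only [cOp, LinearMap.smul_apply, LinearMap.id_coe, id_eq, Pi.mul_apply, Pi.smul_apply,
      Pi.one_apply, smul_eq_mul, mul_one, mul_eq_mul_right_iff, hr, or_false] at this
    simpa using (qp_pow_eq_qp_pow_iff hp).1 this
  have hst : s + t = s' + t' := by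
    have := congrFun (hg0 1) r
    rw [hφ] at this
    simp only [g0Op, LinearMap.coe_mk, AddHom.coe_mk, Pi.one_apply, mul_one, Pi.mul_apply,
      mul_eq_mul_right_iff, hr, or_false] at this
    simpa [add_assoc] using (qp_pow_eq_qp_pow_iff hp).1 this
  exact ⟨hs, add_left_cancel (hs ▸ hst)⟩

end Representation

theorem stmt16_general (p N : ℕ) (hp : 0 < p) :
    -- irreducibility
    (∀ (s t : ZMod p) (V : Submodule ℂ (Bsp p N)),
      (∀ ν, V.map (vOp p N ν) ≤ V) →
      (∀ ν, V.map (gOp p N ν) ≤ V) →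
      V.map (g0Op p N s t) ≤ V →
      V.map (cOp p N s) ≤ V →
      V = ⊥ ∨ V = ⊤) ∧
    -- inequivalence unless (s,t) = (s',t')
    (∀ s t s' t' : ZMod p,
      (∃ φ : Bsp p N ≃ₗ[ℂ] Bsp p N,
        (∀ ν f, φ (vOp p N ν f) = vOp p N ν (φ f)) ∧
        (∀ ν f, φ (gOp p N ν f) = gOp p N ν (φ f)) ∧
        (∀ f, φ (g0Op p N s t f) = g0Op p N s' t' (φ f)) ∧
        (∀ f, φ (cOp p N s f) = cOp p N s' (φ f))) →
      s = s' ∧ t = t') :=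
  ⟨fun _ _ _ hv hg _ _ => eq_bot_or_eq_top_of_vOp_gOp_invariant hp hv hg,
    fun _ _ _ _ ⟨φ, _, hg, hg0, hc⟩ => eq_and_eq_of_intertwining hp φ hg hg0 hc⟩

/-- Each representation `D^{st}_N` of the lattice `U(1)` current algebra is
irreducible, and `D^{st}_N`, `D^{s't'}_N` are inequivalent unless
`(s,t) = (s',t')` (for `p` odd). -/
theorem stmt16 (p N : ℕ) (hp : 0 < p) (hodd : Odd p) (hN : 0 < N) :
    -- irreducibility
    (∀ (s t : ZMod p) (V : Submodule ℂ (Bsp p N)),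
      (∀ ν, V.map (vOp p N ν) ≤ V) →
      (∀ ν, V.map (gOp p N ν) ≤ V) →
      V.map (g0Op p N s t) ≤ V →
      V.map (cOp p N s) ≤ V →
      V = ⊥ ∨ V = ⊤) ∧
    -- inequivalence unless (s,t) = (s',t')
    (∀ s t s' t' : ZMod p,
      (∃ φ : Bsp p N ≃ₗ[ℂ] Bsp p N,
        (∀ ν f, φ (vOp p N ν f) = vOp p N ν (φ f)) ∧
        (∀ ν f, φ (gOp p N ν f) = gOp p N ν (φ f)) ∧
        (∀ f, φ (g0Op p N s t f) = g0Op p N s' t' (φ f)) ∧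
        (∀ f, φ (cOp p N s f) = cOp p N s' (φ f))) →
      s = s' ∧ t = t') :=
  stmt16_general p N hp
end
end
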